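/- arXiv:2101.05328 — 6 statements merged into one kernel-verified Lean document; each statement's English description precedes it below -/
import Mathlib

section
/- Let k(x,x') = κ(‖x−x'‖) be an isotropic kernel on ℝ^d, where κ : [0,∞) → [0,∞) is nonincreasing and the resulting kernel is symmetric positive semidefinite, let x^(1),…,x^(N) be training inputs and σ_n² > 0 a noise variance. Then for every x ∈ ℝ^d and every ρ > 0 such that at least one training input lies within distance ρ of x, the Gaussian process posterior variance satisfies σ_N²(x) ≤ κ(0) − κ(ρ)² / ( κ(0) + σ_n²/|B_ρ(x)| ), where |B_ρ(x)| is the number of training inputs within Euclidean distance ρ of x. -/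
/-!
With `A = K_N + σ_n² I`, Cauchy–Schwarz for the inner product `⟨p, q⟩ = pᵀ A q` gives
`(vᵀ k_N)² ≤ (vᵀ A v) (k_Nᵀ A⁻¹ k_N)` for every test vector `v`. Take `v` the indicator of the
training inputs in `B_ρ(x)`: monotonicity of `κ` gives `vᵀ k_N ≥ |B_ρ(x)| κ(ρ)` and
`vᵀ K_N v ≤ |B_ρ(x)|² κ(0)`, while `vᵀ v = |B_ρ(x)|`.
-/

open Matrix Finset

namespace Matrix

variable {n : Type*} [Fintype n]

theorem PosSemidef.dotProduct_mulVec_comm {A : Matrix n n ℝ} (hA : A.PosSemidef) (p q : n → ℝ) :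
    p ⬝ᵥ (A *ᵥ q) = q ⬝ᵥ (A *ᵥ p) := by
  have hAt : Aᵀ = A := by simpa using hA.isHermitian.eq
  rw [dotProduct_mulVec, ← mulVec_transpose, hAt, dotProduct_comm]

theorem PosSemidef.sq_dotProduct_mulVec_le {A : Matrix n n ℝ} (hA : A.PosSemidef) (p q : n → ℝ) :
    (p ⬝ᵥ (A *ᵥ q)) ^ 2 ≤ (p ⬝ᵥ (A *ᵥ p)) * (q ⬝ᵥ (A *ᵥ q)) := by
  have hdisc : discrim (q ⬝ᵥ (A *ᵥ q)) (2 * (p ⬝ᵥ (A *ᵥ q))) (p ⬝ᵥ (A *ᵥ p)) ≤ 0 := by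
    refine discrim_le_zero fun t => ?_
    have := hA.dotProduct_mulVec_nonneg (p + t • q)
    simp only [star_trivial, mulVec_add, mulVec_smul, add_dotProduct, dotProduct_add,
      smul_dotProduct, dotProduct_smul, smul_eq_mul, hA.dotProduct_mulVec_comm q p] at this
    linarith
  rw [discrim] at hdisc
  linarith

variable [DecidableEq n]

theorem PosDef.sq_dotProduct_le {A : Matrix n n ℝ} (hA : A.PosDef) (v w : n → ℝ) :
    (v ⬝ᵥ w) ^ 2 ≤ (v ⬝ᵥ (A *ᵥ v)) * (w ⬝ᵥ (A⁻¹ *ᵥ w)) := by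
  have hAA : A *ᵥ (A⁻¹ *ᵥ w) = w := by
    rw [mulVec_mulVec, mul_nonsing_inv _ ((isUnit_iff_isUnit_det A).mp hA.isUnit), one_mulVec]
  have := hA.posSemidef.sq_dotProduct_mulVec_le v (A⁻¹ *ᵥ w)
  rwa [hAA, dotProduct_comm (A⁻¹ *ᵥ w)] at this

theorem ite_mem_dotProduct (S : Finset n) (w : n → ℝ) :
    (fun i => if i ∈ S then 1 else 0) ⬝ᵥ w = ∑ i ∈ S, w i := by
  simp only [dotProduct, ite_mul, one_mul, zero_mul, sum_ite_mem, univ_inter]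

theorem ite_mem_dotProduct_mulVec_ite_mem (S : Finset n) (K : Matrix n n ℝ) :
    (fun i => if i ∈ S then 1 else 0) ⬝ᵥ (K *ᵥ fun i => if i ∈ S then 1 else 0) =
      ∑ i ∈ S, ∑ j ∈ S, K i j := by
  simp only [ite_mem_dotProduct, mulVec, dotProduct_comm (K _)]

theorem PosSemidef.sq_div_le_dotProduct_add_smul_one_inv_mulVec {K : Matrix n n ℝ}
    (hK : K.PosSemidef) {σ : ℝ} (hσ : 0 < σ) {S : Finset n} (hS : S.Nonempty) {w : n → ℝ}
    {c M : ℝ} (hc : 0 ≤ c) (hw : ∀ i ∈ S, c ≤ w i) (hKM : ∀ i ∈ S, ∀ j ∈ S, K i j ≤ M) :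
    c ^ 2 / (M + σ / S.card) ≤ w ⬝ᵥ ((K + σ • 1)⁻¹ *ᵥ w) := by
  set B : ℝ := ↑S.card with hB_def
  set v : n → ℝ := fun i => if i ∈ S then 1 else 0
  have hA : (K + σ • 1).PosDef := PosDef.posSemidef_add hK (PosDef.one.smul hσ)
  have hB : 0 < B := by rw [hB_def]; exact_mod_cast hS.card_pos
  have hM : 0 ≤ M := by
    obtain ⟨i, hi⟩ := hS
    exact hK.diag_nonneg.trans (hKM i hi i hi)
  have hvw : B * c ≤ v ⬝ᵥ w := by
    simpa [v, ite_mem_dotProduct] using S.card_nsmul_le_sum w c hw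
  have hvAv : v ⬝ᵥ ((K + σ • 1) *ᵥ v) ≤ B * (B * M + σ) := by
    have hKv : v ⬝ᵥ (K *ᵥ v) ≤ B * (B * M) := by
      rw [ite_mem_dotProduct_mulVec_ite_mem]
      calc ∑ i ∈ S, ∑ j ∈ S, K i j ≤ ∑ i ∈ S, B * M := sum_le_sum fun i hi => by
            simpa [hB_def] using S.sum_le_card_nsmul _ M (hKM i hi)
        _ = B * (B * M) := by simp [hB_def]
    have hvv : v ⬝ᵥ v = B := by simpa [v] using ite_mem_dotProduct S v
    rw [add_mulVec, smul_mulVec, one_mulVec, dotProduct_add, dotProduct_smul, hvv, smul_eq_mul]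
    linarith
  have hq : 0 ≤ w ⬝ᵥ ((K + σ • 1)⁻¹ *ᵥ w) := by
    simpa using hA.inv.posSemidef.dotProduct_mulVec_nonneg w
  calc c ^ 2 / (M + σ / B) = (B * c) ^ 2 / (B * (B * M + σ)) := by
        field_simp
    _ ≤ w ⬝ᵥ ((K + σ • 1)⁻¹ *ᵥ w) := by
        rw [div_le_iff₀' (by positivity)]
        calc (B * c) ^ 2 ≤ (v ⬝ᵥ w) ^ 2 := pow_le_pow_left₀ (by positivity) hvw 2
          _ ≤ (v ⬝ᵥ ((K + σ • 1) *ᵥ v)) * (w ⬝ᵥ ((K + σ • 1)⁻¹ *ᵥ w)) := hA.sq_dotProduct_le v w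
          _ ≤ _ := mul_le_mul_of_nonneg_right hvAv hq

end Matrix

theorem gp_posterior_variance_bound_isotropic_general
    (d N : ℕ)
    (X : Fin N → EuclideanSpace ℝ (Fin d))
    (σn2 : ℝ) (hσ : 0 < σn2)
    (κ : ℝ → ℝ)
    (hκ_nonneg : ∀ r, 0 ≤ r → 0 ≤ κ r)
    (hκ_anti : AntitoneOn κ (Set.Ici (0 : ℝ)))
    (k : EuclideanSpace ℝ (Fin d) → EuclideanSpace ℝ (Fin d) → ℝ)
    (hk_iso : ∀ x y, k x y = κ ‖x - y‖)
    (hpsd : ∀ (m : ℕ) (z : Fin m → EuclideanSpace ℝ (Fin d)),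
      (Matrix.of fun i j => k (z i) (z j)).PosSemidef)
    (x : EuclideanSpace ℝ (Fin d)) (ρ : ℝ) (hρ0 : 0 < ρ)
    (hB : ∃ i, ‖X i - x‖ ≤ ρ) :
    letI K : Matrix (Fin N) (Fin N) ℝ := Matrix.of fun i j => k (X i) (X j)
    letI kN : Fin N → ℝ := fun i => k x (X i)
    letI σ2 : ℝ := k x x - kN ⬝ᵥ ((K + σn2 • (1 : Matrix (Fin N) (Fin N) ℝ))⁻¹ *ᵥ kN)
    letI B : ℝ := (Finset.univ.filter fun i => ‖X i - x‖ ≤ ρ).card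
    σ2 ≤ κ 0 - κ ρ ^ 2 / (κ 0 + σn2 / B) := by
  obtain ⟨i₀, hi₀⟩ := hB
  have hkN : ∀ i ∈ univ.filter fun i => ‖X i - x‖ ≤ ρ, κ ρ ≤ k x (X i) := fun i hi => by
    rw [mem_filter, ← norm_sub_rev] at hi
    exact (hk_iso x (X i)).symm ▸ hκ_anti (norm_nonneg _) hρ0.le hi.2
  have hK : ∀ i j, k (X i) (X j) ≤ κ 0 := fun i j =>
    (hk_iso (X i) (X j)).symm ▸ hκ_anti (le_refl (0 : ℝ)) (norm_nonneg _) (norm_nonneg _)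
  have hquad := (hpsd N X).sq_div_le_dotProduct_add_smul_one_inv_mulVec hσ
    ⟨i₀, mem_filter.2 ⟨mem_univ _, hi₀⟩⟩ (hκ_nonneg ρ hρ0.le) hkN fun i _ j _ => hK i j
  rw [hk_iso x x, sub_self, norm_zero]
  exact sub_le_sub_left hquad _

/-- Corollary 2 (posterior variance bound for isotropic decreasing kernels). -/
theorem gp_posterior_variance_bound_isotropic
    (d N : ℕ) (hN : 1 ≤ N)
    (X : Fin N → EuclideanSpace ℝ (Fin d))
    (σn2 : ℝ) (hσ : 0 < σn2)
    (κ : ℝ → ℝ)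
    (hκ_nonneg : ∀ r, 0 ≤ r → 0 ≤ κ r)
    (hκ_anti : AntitoneOn κ (Set.Ici (0 : ℝ)))
    (k : EuclideanSpace ℝ (Fin d) → EuclideanSpace ℝ (Fin d) → ℝ)
    (hk_iso : ∀ x y, k x y = κ ‖x - y‖)
    (hsymm : ∀ x y, k x y = k y x)
    (hpsd : ∀ (m : ℕ) (z : Fin m → EuclideanSpace ℝ (Fin d)),
      (Matrix.of fun i j => k (z i) (z j)).PosSemidef)
    (x : EuclideanSpace ℝ (Fin d)) (ρ : ℝ) (hρ0 : 0 < ρ)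
    (hB : ∃ i, ‖X i - x‖ ≤ ρ) :
    letI K : Matrix (Fin N) (Fin N) ℝ := Matrix.of fun i j => k (X i) (X j)
    letI kN : Fin N → ℝ := fun i => k x (X i)
    letI σ2 : ℝ := k x x - kN ⬝ᵥ ((K + σn2 • (1 : Matrix (Fin N) (Fin N) ℝ))⁻¹ *ᵥ kN)
    letI B : ℝ := (Finset.univ.filter fun i => ‖X i - x‖ ≤ ρ).card
    σ2 ≤ κ 0 - κ ρ ^ 2 / (κ 0 + σn2 / B) :=
  gp_posterior_variance_bound_isotropic_general d N X σn2 hσ κ hκ_nonneg hκ_anti k hk_iso hpsd x ρ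
    hρ0 hB
end

section
/- Adding a training point never increases the Gaussian process posterior variance: for a symmetric positive-semidefinite kernel k on ℝ^d, noise variance σ_n² > 0, training inputs x^(1),…,x^(N) and an additional input x^(N+1), for every x ∈ ℝ^d one has σ_{N+1}²(x) ≤ σ_N²(x), where σ_N²(x) is the posterior variance computed from the first N inputs and σ_{N+1}²(x) the posterior variance computed from all N+1 inputs. -/
/-!
Writing `B = K + σ² I`, the posterior variance is `k(x,x) - vᵀ B⁻¹ v`. For positive definite `B`,
`vᵀ B⁻¹ v = max_w (2 wᵀv - wᵀ B w)`, attained at `w = B⁻¹ v`. The matrix for the first `N` inputs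
is the principal submatrix of the one for all `N + 1` inputs, so its maximum ranges over the vectors
whose last coordinate vanishes and can only be smaller.
-/

open Matrix

section

variable {m n : Type*} [Fintype m] [Fintype n] [DecidableEq m] [DecidableEq n]

theorem Matrix.two_mul_dotProduct_sub_dotProduct_inv_mulVec_eq {A : Matrix n n ℝ}
    (hA : IsUnit A.det) (v : n → ℝ) :
    2 * ((A⁻¹ *ᵥ v) ⬝ᵥ v) - (A⁻¹ *ᵥ v) ⬝ᵥ (A *ᵥ (A⁻¹ *ᵥ v)) = v ⬝ᵥ (A⁻¹ *ᵥ v) := by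
  rw [mulVec_mulVec, mul_nonsing_inv A hA, one_mulVec, dotProduct_comm]
  ring

theorem Matrix.PosDef.two_mul_dotProduct_sub_dotProduct_mulVec_le {A : Matrix n n ℝ}
    (hA : A.PosDef) (v w : n → ℝ) :
    2 * (w ⬝ᵥ v) - w ⬝ᵥ (A *ᵥ w) ≤ v ⬝ᵥ (A⁻¹ *ᵥ v) := by
  set u := A⁻¹ *ᵥ v
  have hAu : A *ᵥ u = v := by
    rw [mulVec_mulVec, mul_nonsing_inv A ((isUnit_iff_isUnit_det A).mp hA.isUnit), one_mulVec]
  have hcross : u ⬝ᵥ (A *ᵥ w) = w ⬝ᵥ v := by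
    rw [dotProduct_mulVec, ← mulVec_transpose, (isHermitian_iff_isSymm.mp hA.isHermitian).eq,
      hAu, dotProduct_comm]
  have hnonneg : 0 ≤ (u - w) ⬝ᵥ (A *ᵥ (u - w)) := by
    simpa using hA.posSemidef.dotProduct_mulVec_nonneg (u - w)
  rw [mulVec_sub, sub_dotProduct, dotProduct_sub, dotProduct_sub, hAu, hcross,
    dotProduct_comm u v] at hnonneg
  linarith

theorem Matrix.PosDef.dotProduct_inv_mulVec_transpose_mul_mul_le {A : Matrix n n ℝ}
    (hA : A.PosDef) (P : Matrix n m ℝ) (hB : IsUnit (Pᵀ * A * P).det) (v : n → ℝ) :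
    (Pᵀ *ᵥ v) ⬝ᵥ ((Pᵀ * A * P)⁻¹ *ᵥ (Pᵀ *ᵥ v)) ≤ v ⬝ᵥ (A⁻¹ *ᵥ v) := by
  set w := (Pᵀ * A * P)⁻¹ *ᵥ (Pᵀ *ᵥ v)
  have hlin : (P *ᵥ w) ⬝ᵥ v = w ⬝ᵥ (Pᵀ *ᵥ v) := by
    rw [dotProduct_comm, dotProduct_mulVec, ← mulVec_transpose, dotProduct_comm]
  have hquad : (P *ᵥ w) ⬝ᵥ (A *ᵥ (P *ᵥ w)) = w ⬝ᵥ ((Pᵀ * A * P) *ᵥ w) := by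
    rw [← mulVec_mulVec, ← mulVec_mulVec, dotProduct_mulVec _ Pᵀ, vecMul_transpose]
  calc (Pᵀ *ᵥ v) ⬝ᵥ ((Pᵀ * A * P)⁻¹ *ᵥ (Pᵀ *ᵥ v))
      = 2 * ((P *ᵥ w) ⬝ᵥ v) - (P *ᵥ w) ⬝ᵥ (A *ᵥ (P *ᵥ w)) := by
        rw [hlin, hquad, two_mul_dotProduct_sub_dotProduct_inv_mulVec_eq hB]
    _ ≤ v ⬝ᵥ (A⁻¹ *ᵥ v) := hA.two_mul_dotProduct_sub_dotProduct_mulVec_le v (P *ᵥ w)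

theorem Matrix.PosDef.dotProduct_inv_mulVec_submatrix_le {A : Matrix n n ℝ} (hA : A.PosDef)
    {f : m → n} (hf : Function.Injective f) (v : n → ℝ) :
    (v ∘ f) ⬝ᵥ ((A.submatrix f f)⁻¹ *ᵥ (v ∘ f)) ≤ v ⬝ᵥ (A⁻¹ *ᵥ v) := by
  let P : Matrix n m ℝ := (1 : Matrix n n ℝ).submatrix id f
  have hPAP : Pᵀ * A * P = A.submatrix f f := by
    ext i j
    simp [P, mul_apply, one_apply]
  have hPv : Pᵀ *ᵥ v = v ∘ f := by
    ext i
    simp [P, mulVec, dotProduct, one_apply]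
  have hB : IsUnit (Pᵀ * A * P).det :=
    hPAP ▸ (isUnit_iff_isUnit_det _).mp (hA.submatrix hf).isUnit
  simpa only [hPAP, hPv] using hA.dotProduct_inv_mulVec_transpose_mul_mul_le P hB v

end

theorem gp_posterior_variance_monotone_general
    (d N : ℕ)
    (X : Fin (N + 1) → EuclideanSpace ℝ (Fin d))
    (σn2 : ℝ) (hσ : 0 < σn2)
    (k : EuclideanSpace ℝ (Fin d) → EuclideanSpace ℝ (Fin d) → ℝ)
    (hpsd : ∀ (m : ℕ) (z : Fin m → EuclideanSpace ℝ (Fin d)),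
      (Matrix.of fun i j => k (z i) (z j)).PosSemidef)
    (x : EuclideanSpace ℝ (Fin d)) :
    letI X' : Fin N → EuclideanSpace ℝ (Fin d) := fun i => X i.castSucc
    letI KN : Matrix (Fin N) (Fin N) ℝ := Matrix.of fun i j => k (X' i) (X' j)
    letI kN : Fin N → ℝ := fun i => k x (X' i)
    letI σ2N : ℝ := k x x - kN ⬝ᵥ ((KN + σn2 • (1 : Matrix (Fin N) (Fin N) ℝ))⁻¹ *ᵥ kN)
    letI KN1 : Matrix (Fin (N + 1)) (Fin (N + 1)) ℝ := Matrix.of fun i j => k (X i) (X j)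
    letI kN1 : Fin (N + 1) → ℝ := fun i => k x (X i)
    letI σ2N1 : ℝ :=
      k x x - kN1 ⬝ᵥ ((KN1 + σn2 • (1 : Matrix (Fin (N + 1)) (Fin (N + 1)) ℝ))⁻¹ *ᵥ kN1)
    σ2N1 ≤ σ2N := by
  have hB := PosDef.posSemidef_add (hpsd (N + 1) X) (PosDef.one.smul hσ)
  have hsub : (of (fun i j ↦ k (X i) (X j)) + σn2 • 1).submatrix Fin.castSucc Fin.castSucc =
      of (fun i j ↦ k (X i.castSucc) (X j.castSucc)) + σn2 • 1 := by
    ext i j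
    simp [one_apply]
  have hle := hB.dotProduct_inv_mulVec_submatrix_le (Fin.castSucc_injective N) (fun i ↦ k x (X i))
  rw [hsub] at hle
  exact sub_le_sub_left hle _

/-- Adding a training point never increases the GP posterior variance. -/
theorem gp_posterior_variance_monotone
    (d N : ℕ)
    (X : Fin (N + 1) → EuclideanSpace ℝ (Fin d))
    (σn2 : ℝ) (hσ : 0 < σn2)
    (k : EuclideanSpace ℝ (Fin d) → EuclideanSpace ℝ (Fin d) → ℝ)
    (hsymm : ∀ x y, k x y = k y x)
    (hpsd : ∀ (m : ℕ) (z : Fin m → EuclideanSpace ℝ (Fin d)),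
      (Matrix.of fun i j => k (z i) (z j)).PosSemidef)
    (x : EuclideanSpace ℝ (Fin d)) :
    letI X' : Fin N → EuclideanSpace ℝ (Fin d) := fun i => X i.castSucc
    letI KN : Matrix (Fin N) (Fin N) ℝ := Matrix.of fun i j => k (X' i) (X' j)
    letI kN : Fin N → ℝ := fun i => k x (X' i)
    letI σ2N : ℝ := k x x - kN ⬝ᵥ ((KN + σn2 • (1 : Matrix (Fin N) (Fin N) ℝ))⁻¹ *ᵥ kN)
    letI KN1 : Matrix (Fin (N + 1)) (Fin (N + 1)) ℝ := Matrix.of fun i j => k (X i) (X j)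
    letI kN1 : Fin (N + 1) → ℝ := fun i => k x (X i)
    letI σ2N1 : ℝ :=
      k x x - kN1 ⬝ᵥ ((KN1 + σn2 • (1 : Matrix (Fin (N + 1)) (Fin (N + 1)) ℝ))⁻¹ *ᵥ kN1)
    σ2N1 ≤ σ2N :=
  gp_posterior_variance_monotone_general d N X σn2 hσ k hpsd x
end

section
/- Let k be a symmetric positive-semidefinite kernel on ℝ^d that is Lipschitz with constant L_k > 0, let x^(1),…,x^(N) be training inputs and σ_n² > 0 a noise variance. Then for every x ∈ ℝ^d and every ρ with 0 < ρ ≤ k(x,x)/L_k such that at least one training input lies within distance ρ of x, the posterior variance satisfies σ_N²(x) ≤ 4 L_k ρ + σ_n² / |B_ρ(x)|, where |B_ρ(x)| is the number of training inputs within Euclidean distance ρ of x. -/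
open Matrix Finset
open scoped BigOperators

/-! For positive definite `A`, `b ⬝ᵥ A⁻¹ b = max_v (2 v ⬝ᵥ b - v ⬝ᵥ A v)`, so any test vector `v`
bounds the posterior variance from above. Take `v` to be the uniform weights on the training
inputs in `B_ρ(x)`: the Lipschitz bound gives `v ⬝ᵥ k_N(x) ≥ k(x,x) - L_k ρ` and
`v ⬝ᵥ K_N v ≤ k(x,x) + 2 L_k ρ`, while the noise term contributes `σ_n² ‖v‖² = σ_n² / |B_ρ(x)|`. -/

theorem Matrix.PosDef.two_mul_dotProduct_sub_le_dotProduct_inv_mulVec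
    {n : Type*} [Fintype n] [DecidableEq n] {A : Matrix n n ℝ} (hA : A.PosDef) (b v : n → ℝ) :
    2 * (v ⬝ᵥ b) - v ⬝ᵥ (A *ᵥ v) ≤ b ⬝ᵥ (A⁻¹ *ᵥ b) := by
  set u := A⁻¹ *ᵥ b
  have hAu : A *ᵥ u = b := by
    rw [mulVec_mulVec, mul_nonsing_inv _ hA.det_pos.ne'.isUnit, one_mulVec]
  -- completing the square: the quadratic form of `A` at `v - u` is nonnegative
  have hsq := hA.posSemidef.dotProduct_mulVec_nonneg (v - u)
  have hsymm : u ⬝ᵥ (A *ᵥ v) = v ⬝ᵥ b := by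
    rw [dotProduct_mulVec, ← mulVec_transpose, show Aᵀ = A from hA.isHermitian, hAu,
      dotProduct_comm]
  simp only [star_trivial, mulVec_sub, sub_dotProduct, dotProduct_sub, hAu] at hsq
  have : u ⬝ᵥ b = b ⬝ᵥ u := dotProduct_comm _ _
  linarith

section UniformWeights

variable {ι : Type*} [DecidableEq ι] {S : Finset ι}

noncomputable def uniformWeights (S : Finset ι) (i : ι) : ℝ := if i ∈ S then (#S : ℝ)⁻¹ else 0

theorem uniformWeights_of_mem {i : ι} (hi : i ∈ S) : uniformWeights S i = (#S : ℝ)⁻¹ := if_pos hi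

variable [Fintype ι]

theorem uniformWeights_dotProduct (S : Finset ι) (w : ι → ℝ) :
    uniformWeights S ⬝ᵥ w = 𝔼 i ∈ S, w i := by
  simp only [uniformWeights, dotProduct, ite_mul, zero_mul, sum_ite_mem, univ_inter,
    expect_eq_sum_div_card, inv_mul_eq_div, sum_div]

theorem uniformWeights_dotProduct_self (hS : S.Nonempty) :
    uniformWeights S ⬝ᵥ uniformWeights S = (#S : ℝ)⁻¹ := by
  rw [uniformWeights_dotProduct, expect_congr rfl fun _ => uniformWeights_of_mem,
    expect_const hS]

theorem le_uniformWeights_dotProduct (hS : S.Nonempty) {w : ι → ℝ} {a : ℝ}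
    (h : ∀ i ∈ S, a ≤ w i) : a ≤ uniformWeights S ⬝ᵥ w :=
  uniformWeights_dotProduct S w ▸ le_expect hS h

theorem uniformWeights_dotProduct_le (hS : S.Nonempty) {w : ι → ℝ} {a : ℝ}
    (h : ∀ i ∈ S, w i ≤ a) : uniformWeights S ⬝ᵥ w ≤ a :=
  uniformWeights_dotProduct S w ▸ expect_le hS h

theorem uniformWeights_dotProduct_mulVec_le (hS : S.Nonempty) {M : Matrix ι ι ℝ} {a : ℝ}
    (h : ∀ i ∈ S, ∀ j ∈ S, M i j ≤ a) : uniformWeights S ⬝ᵥ (M *ᵥ uniformWeights S) ≤ a :=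
  uniformWeights_dotProduct_le hS fun i hi => by
    rw [mulVec, dotProduct_comm]
    exact uniformWeights_dotProduct_le hS (h i hi)

end UniformWeights

section LipschitzKernel

variable {E : Type*} [SeminormedAddCommGroup E] {k : E → E → ℝ} {L ρ : ℝ} {x y z : E}

theorem sub_le_kernel_of_norm_sub_le (hsymm : ∀ x y, k x y = k y x)
    (hlip : ∀ x y z, |k x z - k y z| ≤ L * ‖x - y‖) (hL : 0 ≤ L) (hy : ‖y - x‖ ≤ ρ) :
    k x x - L * ρ ≤ k x y := by
  have h := (abs_le.1 (hlip y x x)).1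
  have := mul_le_mul_of_nonneg_left hy hL
  rw [hsymm x y]
  linarith

theorem kernel_le_add_of_norm_sub_le (hsymm : ∀ x y, k x y = k y x)
    (hlip : ∀ x y z, |k x z - k y z| ≤ L * ‖x - y‖) (hL : 0 ≤ L) (hy : ‖y - x‖ ≤ ρ)
    (hz : ‖z - x‖ ≤ ρ) : k y z ≤ k x x + 2 * L * ρ := by
  have hyz := (abs_le.1 (hlip y x z)).2
  have hzx := (abs_le.1 (hlip z x x)).2
  have := mul_le_mul_of_nonneg_left hy hL
  have := mul_le_mul_of_nonneg_left hz hL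
  rw [hsymm x z] at hyz
  linarith

end LipschitzKernel

theorem gp_posterior_variance_bound_simplified_general
    (d N : ℕ)
    (X : Fin N → EuclideanSpace ℝ (Fin d))
    (σn2 : ℝ) (hσ : 0 < σn2)
    (k : EuclideanSpace ℝ (Fin d) → EuclideanSpace ℝ (Fin d) → ℝ)
    (hsymm : ∀ x y, k x y = k y x)
    (hpsd : ∀ (m : ℕ) (z : Fin m → EuclideanSpace ℝ (Fin d)),
      (Matrix.of fun i j => k (z i) (z j)).PosSemidef)
    (Lk : ℝ) (hLk : 0 < Lk)
    (hlip : ∀ x y z, |k x z - k y z| ≤ Lk * ‖x - y‖)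
    (x : EuclideanSpace ℝ (Fin d)) (ρ : ℝ)
    (hB : ∃ i, ‖X i - x‖ ≤ ρ) :
    letI K : Matrix (Fin N) (Fin N) ℝ := Matrix.of fun i j => k (X i) (X j)
    letI kN : Fin N → ℝ := fun i => k x (X i)
    letI σ2 : ℝ := k x x - kN ⬝ᵥ ((K + σn2 • (1 : Matrix (Fin N) (Fin N) ℝ))⁻¹ *ᵥ kN)
    letI B : ℝ := (Finset.univ.filter fun i => ‖X i - x‖ ≤ ρ).card
    σ2 ≤ 4 * Lk * ρ + σn2 / B := by
  set K : Matrix (Fin N) (Fin N) ℝ := of fun i j => k (X i) (X j)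
  set kN : Fin N → ℝ := fun i => k x (X i)
  set S := univ.filter fun i => ‖X i - x‖ ≤ ρ
  obtain ⟨i₀, hi₀⟩ := hB
  have hS : S.Nonempty := ⟨i₀, mem_filter.2 ⟨mem_univ _, hi₀⟩⟩
  have hnear : ∀ i ∈ S, ‖X i - x‖ ≤ ρ := fun i hi => (mem_filter.1 hi).2
  have hA : (K + σn2 • 1).PosDef := PosDef.posSemidef_add (hpsd N X) (PosDef.one.smul hσ)
  have hcross : k x x - Lk * ρ ≤ uniformWeights S ⬝ᵥ kN := le_uniformWeights_dotProduct hS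
    fun i hi => sub_le_kernel_of_norm_sub_le hsymm hlip hLk.le (hnear i hi)
  have hquad : uniformWeights S ⬝ᵥ (K *ᵥ uniformWeights S) ≤ k x x + 2 * Lk * ρ :=
    uniformWeights_dotProduct_mulVec_le hS fun i hi j hj =>
      kernel_le_add_of_norm_sub_le hsymm hlip hLk.le (hnear i hi) (hnear j hj)
  have hvar := hA.two_mul_dotProduct_sub_le_dotProduct_inv_mulVec kN (uniformWeights S)
  rw [add_mulVec, dotProduct_add, smul_mulVec, one_mulVec, dotProduct_smul, smul_eq_mul,
    uniformWeights_dotProduct_self hS] at hvar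
  rw [div_eq_mul_inv]
  linarith

/-- Simplified posterior variance bound: σ_N²(x) ≤ 4 L_k ρ + σ_n²/|B_ρ(x)|. -/
theorem gp_posterior_variance_bound_simplified
    (d N : ℕ) (hN : 1 ≤ N)
    (X : Fin N → EuclideanSpace ℝ (Fin d))
    (σn2 : ℝ) (hσ : 0 < σn2)
    (k : EuclideanSpace ℝ (Fin d) → EuclideanSpace ℝ (Fin d) → ℝ)
    (hsymm : ∀ x y, k x y = k y x)
    (hpsd : ∀ (m : ℕ) (z : Fin m → EuclideanSpace ℝ (Fin d)),
      (Matrix.of fun i j => k (z i) (z j)).PosSemidef)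
    (Lk : ℝ) (hLk : 0 < Lk)
    (hlip : ∀ x y z, |k x z - k y z| ≤ Lk * ‖x - y‖)
    (x : EuclideanSpace ℝ (Fin d)) (ρ : ℝ)
    (hρ0 : 0 < ρ) (hρ : ρ ≤ k x x / Lk)
    (hB : ∃ i, ‖X i - x‖ ≤ ρ) :
    letI K : Matrix (Fin N) (Fin N) ℝ := Matrix.of fun i j => k (X i) (X j)
    letI kN : Fin N → ℝ := fun i => k x (X i)
    letI σ2 : ℝ := k x x - kN ⬝ᵥ ((K + σn2 • (1 : Matrix (Fin N) (Fin N) ℝ))⁻¹ *ᵥ kN)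
    letI B : ℝ := (Finset.univ.filter fun i => ‖X i - x‖ ≤ ρ).card
    σ2 ≤ 4 * Lk * ρ + σn2 / B :=
  gp_posterior_variance_bound_simplified_general d N X σn2 hσ k hsymm hpsd Lk hLk hlip x ρ hB
end

section
/- Let k be a symmetric positive-semidefinite kernel on ℝ^d that is Lipschitz with constant L_k > 0 and uniformly bounded, |k(z,z')| ≤ k̄ for all z, z', let x^(1),…,x^(N) be training inputs and σ_n² > 0 a noise variance. Then the Gaussian process posterior variance σ_N²(·) is Lipschitz continuous with |σ_N²(x) − σ_N²(x')| ≤ 2 L_k ( 1 + N ‖(K_N + σ_n² I_N)⁻¹‖ · k̄ ) ‖x − x'‖ for all x, x' ∈ ℝ^d, where ‖(K_N + σ_n² I_N)⁻¹‖ is the operator norm of the inverse data covariance matrix. -/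
open Matrix
open scoped RealInnerProductSpace

/-!
Split `σ²(x) − σ²(x')` into the prior part `k(x,x) − k(x',x')`, bounded by `2 L_k ‖x − x'‖`
through symmetry and the Lipschitz bound in each argument, and the difference of the quadratic
forms `v ↦ ⟪v, A⁻¹ v⟫` at the feature vectors `k_N(x)`, `k_N(x')`. A quadratic form of a bounded
operator `T` satisfies `|⟪v, T v⟫ − ⟪w, T w⟫| ≤ ‖T‖ ‖v − w‖ (‖v‖ + ‖w‖)`, and entrywise bounds give
`‖k_N(x)‖ ≤ √N k̄` and `‖k_N(x) − k_N(x')‖ ≤ √N L_k ‖x − x'‖`.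
-/

lemma EuclideanSpace.norm_toLp_le_sqrt_card_mul {ι : Type*} [Fintype ι] {f : ι → ℝ} {c : ℝ}
    (hc : 0 ≤ c) (hf : ∀ i, |f i| ≤ c) :
    ‖WithLp.toLp 2 f‖ ≤ √(Fintype.card ι) * c := by
  rw [EuclideanSpace.norm_eq, ← Real.sqrt_mul_self hc, ← Real.sqrt_mul (Nat.cast_nonneg _)]
  refine Real.sqrt_le_sqrt ?_
  calc ∑ i, ‖f i‖ ^ 2 ≤ ∑ _ : ι, c ^ 2 :=
        Finset.sum_le_sum fun i _ =>
          pow_le_pow_left₀ (norm_nonneg _) ((Real.norm_eq_abs _).trans_le (hf i)) 2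
    _ = Fintype.card ι * (c * c) := by simp [sq]

lemma abs_inner_apply_self_sub_le {E : Type*} [NormedAddCommGroup E] [InnerProductSpace ℝ E]
    (T : E →L[ℝ] E) (v w : E) :
    |⟪v, T v⟫ - ⟪w, T w⟫| ≤ ‖T‖ * ‖v - w‖ * (‖v‖ + ‖w‖) := by
  have hsplit : ⟪v, T v⟫ - ⟪w, T w⟫ = ⟪v - w, T v⟫ + ⟪w, T (v - w)⟫ := by
    simp only [inner_sub_left, map_sub, inner_sub_right]
    ring
  rw [hsplit]
  calc |⟪v - w, T v⟫ + ⟪w, T (v - w)⟫| ≤ |⟪v - w, T v⟫| + |⟪w, T (v - w)⟫| := abs_add_le _ _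
    _ ≤ ‖v - w‖ * ‖T v‖ + ‖w‖ * ‖T (v - w)‖ :=
        add_le_add (abs_real_inner_le_norm _ _) (abs_real_inner_le_norm _ _)
    _ ≤ ‖v - w‖ * (‖T‖ * ‖v‖) + ‖w‖ * (‖T‖ * ‖v - w‖) := by
        gcongr <;> exact T.le_opNorm _
    _ = ‖T‖ * ‖v - w‖ * (‖v‖ + ‖w‖) := by ring

lemma abs_sub_diag_le_of_lipschitz {α : Type*} [SeminormedAddCommGroup α] {k : α → α → ℝ}
    {L : ℝ} (hsymm : ∀ x y, k x y = k y x) (hlip : ∀ x y z, |k x z - k y z| ≤ L * ‖x - y‖)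
    (x y : α) : |k x x - k y y| ≤ 2 * L * ‖x - y‖ := by
  have hright : |k y x - k y y| ≤ L * ‖x - y‖ := by
    rw [hsymm y x, hsymm y y]
    exact hlip x y y
  calc |k x x - k y y| = |(k x x - k y x) + (k y x - k y y)| := by
        rw [sub_add_sub_cancel]
    _ ≤ |k x x - k y x| + |k y x - k y y| := abs_add_le _ _
    _ ≤ L * ‖x - y‖ + L * ‖x - y‖ := add_le_add (hlip x y x) hright
    _ = 2 * L * ‖x - y‖ := by ring

theorem gp_posterior_variance_lipschitz_general
    (d N : ℕ)
    (X : Fin N → EuclideanSpace ℝ (Fin d))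
    (σn2 : ℝ)
    (k : EuclideanSpace ℝ (Fin d) → EuclideanSpace ℝ (Fin d) → ℝ)
    (hsymm : ∀ x y, k x y = k y x)
    (Lk : ℝ)
    (hlip : ∀ x y z, |k x z - k y z| ≤ Lk * ‖x - y‖)
    (kbar : ℝ) (hbdd : ∀ z z', |k z z'| ≤ kbar) :
    letI K : Matrix (Fin N) (Fin N) ℝ := Matrix.of fun i j => k (X i) (X j)
    letI A : Matrix (Fin N) (Fin N) ℝ := K + σn2 • (1 : Matrix (Fin N) (Fin N) ℝ)
    letI σ2 : EuclideanSpace ℝ (Fin d) → ℝ := fun x =>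
      k x x - (fun i => k x (X i)) ⬝ᵥ (A⁻¹ *ᵥ fun i => k x (X i))
    ∀ x x' : EuclideanSpace ℝ (Fin d),
      |σ2 x - σ2 x'| ≤
        2 * Lk * (1 + N * ‖Matrix.toEuclideanCLM (𝕜 := ℝ) A⁻¹‖ * kbar) * ‖x - x'‖ := by
  intro x x'
  set T := Matrix.toEuclideanCLM (𝕜 := ℝ)
    ((Matrix.of fun i j => k (X i) (X j)) + σn2 • (1 : Matrix (Fin N) (Fin N) ℝ))⁻¹
  let v : EuclideanSpace ℝ (Fin d) → EuclideanSpace ℝ (Fin N) := fun y =>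
    WithLp.toLp 2 fun i => k y (X i)
  have hkbar : 0 ≤ kbar := (abs_nonneg _).trans (hbdd x x)
  have hv : ∀ y, ‖v y‖ ≤ √N * kbar := fun y => by
    simpa using EuclideanSpace.norm_toLp_le_sqrt_card_mul hkbar fun i => hbdd y (X i)
  have hLk : 0 ≤ Lk * ‖x - x'‖ := (abs_nonneg _).trans (hlip x x' x)
  have hv_sub : ‖v x - v x'‖ ≤ √N * (Lk * ‖x - x'‖) := by
    simpa [v, ← WithLp.toLp_sub, Pi.sub_def] using
      EuclideanSpace.norm_toLp_le_sqrt_card_mul hLk fun i => hlip x x' (X i)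
  calc _ = |(k x x - k x' x') - (⟪v x, T (v x)⟫ - ⟪v x', T (v x')⟫)| := by
        simp only [T, v, inner_toEuclideanCLM]
        congr 1
        ring
    _ ≤ |k x x - k x' x'| + |⟪v x, T (v x)⟫ - ⟪v x', T (v x')⟫| := abs_sub _ _
    _ ≤ 2 * Lk * ‖x - x'‖ + ‖T‖ * (√N * (Lk * ‖x - x'‖)) * (√N * kbar + √N * kbar) := by
        gcongr
        · exact abs_sub_diag_le_of_lipschitz hsymm hlip x x'
        · exact (abs_inner_apply_self_sub_le T _ _).trans (by gcongr <;> apply hv)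
    _ = 2 * Lk * (1 + N * ‖T‖ * kbar) * ‖x - x'‖ := by
        linear_combination (2 * Lk * ‖x - x'‖ * ‖T‖ * kbar) *
          Real.mul_self_sqrt (Nat.cast_nonneg (α := ℝ) N)

/-- The GP posterior variance is Lipschitz with constant
2 L_k (1 + N ‖(K_N + σ_n² I)⁻¹‖ k̄). -/
theorem gp_posterior_variance_lipschitz
    (d N : ℕ) (hN : 1 ≤ N)
    (X : Fin N → EuclideanSpace ℝ (Fin d))
    (σn2 : ℝ) (hσ : 0 < σn2)
    (k : EuclideanSpace ℝ (Fin d) → EuclideanSpace ℝ (Fin d) → ℝ)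
    (hsymm : ∀ x y, k x y = k y x)
    (hpsd : ∀ (m : ℕ) (z : Fin m → EuclideanSpace ℝ (Fin d)),
      (Matrix.of fun i j => k (z i) (z j)).PosSemidef)
    (Lk : ℝ) (hLk : 0 < Lk)
    (hlip : ∀ x y z, |k x z - k y z| ≤ Lk * ‖x - y‖)
    (kbar : ℝ) (hbdd : ∀ z z', |k z z'| ≤ kbar) :
    letI K : Matrix (Fin N) (Fin N) ℝ := Matrix.of fun i j => k (X i) (X j)
    letI A : Matrix (Fin N) (Fin N) ℝ := K + σn2 • (1 : Matrix (Fin N) (Fin N) ℝ)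
    letI σ2 : EuclideanSpace ℝ (Fin d) → ℝ := fun x =>
      k x x - (fun i => k x (X i)) ⬝ᵥ (A⁻¹ *ᵥ fun i => k x (X i))
    ∀ x x' : EuclideanSpace ℝ (Fin d),
      |σ2 x - σ2 x'| ≤
        2 * Lk * (1 + N * ‖Matrix.toEuclideanCLM (𝕜 := ℝ) A⁻¹‖ * kbar) * ‖x - x'‖ :=
  gp_posterior_variance_lipschitz_general d N X σn2 k hsymm Lk hlip kbar hbdd
end

section
/- Let ξ_1,…,ξ_N be independent, identically distributed Gaussian random variables with mean 0 and variance σ² > 0. Then for every η ≥ 0, P( Σ_{i=1}^N ξ_i² ≥ σ² ( N + 2√(Nη) + 2η ) ) ≤ exp(−η). -/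
/-!
Chernoff's method. For `X ~ N(0, σ²)` and `2 t σ² < 1`, a Gaussian integral gives
`E exp (t X²) = (1 - 2 t σ²) ^ (-1/2)`, so by independence
`P (∑ ξᵢ² ≥ σ² m) ≤ exp (-t σ² m) (1 - 2 t σ²) ^ (-N/2)`. With `m = N (1 + 2u + 2u²)`,
`u = √(η / N)`, the optimal choice `2 t σ² = 1 - N / m` makes the bound
`exp (-N u - η) (1 + 2u + 2u²) ^ (N/2)`, and `1 + 2u + 2u² ≤ exp (2u)` finishes.
-/

open MeasureTheory ProbabilityTheory Real
open scoped NNReal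

lemma mgf_sq_gaussianReal (v : ℝ≥0) {t : ℝ} (ht : 2 * t * v < 1) :
    mgf (fun x ↦ x ^ 2) (gaussianReal 0 v) t = (√(1 - 2 * t * v))⁻¹ := by
  rcases eq_or_ne v 0 with rfl | hv
  · simp [mgf, gaussianReal_zero_var]
  have hdensity : ∀ x : ℝ, gaussianPDFReal 0 v x • rexp (t * x ^ 2) =
      (√(2 * π * v))⁻¹ * rexp (-((2 * (v : ℝ))⁻¹ - t) * x ^ 2) := fun x ↦ by
    rw [gaussianPDFReal_def, smul_eq_mul, mul_assoc, ← exp_add]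
    congr 2
    field_simp
    ring
  have hratio : π / ((2 * (v : ℝ))⁻¹ - t) = 2 * π * v / (1 - 2 * t * v) := by
    have : (1 : ℝ) - 2 * t * v ≠ 0 := by linarith
    field_simp
  rw [mgf, integral_gaussianReal_eq_integral_smul hv]
  simp_rw [hdensity]
  rw [integral_const_mul, integral_gaussian, hratio, sqrt_div' _ (by linarith)]
  have : √(2 * π * v) ≠ 0 := by positivity
  field_simp

lemma mgf_sq_of_map_eq_gaussianReal {Ω : Type*} [MeasurableSpace Ω] {P : Measure Ω}
    {X : Ω → ℝ} {v : ℝ≥0} (hX : P.map X = gaussianReal 0 v) {t : ℝ} (ht : 2 * t * v < 1) :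
    mgf (fun ω ↦ X ω ^ 2) P t = (√(1 - 2 * t * v))⁻¹ := by
  have hX_meas : AEMeasurable X P := aemeasurable_of_map_neZero (by rw [hX]; infer_instance)
  rw [← mgf_sq_gaussianReal v ht, ← hX, mgf_map hX_meas (by fun_prop)]
  rfl

lemma ProbabilityTheory.iIndepFun.measureReal_sum_sq_ge_le_exp_mul {ι Ω : Type*} [Fintype ι]
    [MeasurableSpace Ω] {P : Measure Ω} {ξ : ι → Ω → ℝ} {v : ℝ≥0} (hindep : iIndepFun ξ P)
    (hgauss : ∀ i, P.map (ξ i) = gaussianReal 0 v) {t : ℝ} (ht₀ : 0 ≤ t) (ht : 2 * t * v < 1)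
    (ε : ℝ) :
    P.real {ω | ε ≤ ∑ i, ξ i ω ^ 2} ≤ rexp (-t * ε) * (√(1 - 2 * t * v))⁻¹ ^ Fintype.card ι := by
  have := hindep.isProbabilityMeasure
  have hsq : iIndepFun (fun i ω ↦ ξ i ω ^ 2) P :=
    hindep.comp (fun _ x ↦ x ^ 2) fun _ ↦ by fun_prop
  have hmeas i : AEMeasurable (ξ i) P :=
    aemeasurable_of_map_neZero (by rw [hgauss i]; infer_instance)
  have hmgf : mgf (∑ i, fun ω ↦ ξ i ω ^ 2) P t = (√(1 - 2 * t * v))⁻¹ ^ Fintype.card ι := by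
    rw [hsq.mgf_sum₀ (fun i ↦ (hmeas i).pow_const 2)]
    simp [mgf_sq_of_map_eq_gaussianReal (hgauss _) ht]
  have hint : Integrable (fun ω ↦ rexp (t * (∑ i, fun ω ↦ ξ i ω ^ 2) ω)) P := by
    refine .of_integral_ne_zero ?_
    rw [← mgf, hmgf]
    have : 0 < 1 - 2 * t * v := by linarith
    positivity
  simpa [hmgf] using measure_ge_le_exp_mul_mgf ε ht₀ hint

lemma one_add_two_mul_add_two_mul_sq_le_exp {u : ℝ} (hu : 0 ≤ u) :
    1 + 2 * u + 2 * u ^ 2 ≤ rexp (2 * u) := by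
  convert quadratic_le_exp_of_nonneg (by positivity : 0 ≤ 2 * u) using 1
  ring

lemma sqrt_div_pow_le_exp_sqrt (n : ℕ) {η : ℝ} (hη : 0 ≤ η) :
    √((n + 2 * √(n * η) + 2 * η) / n) ^ n ≤ rexp √(n * η) := by
  rcases n.eq_zero_or_pos with rfl | hn
  · simp
  have hn' : (0 : ℝ) < n := by exact_mod_cast hn
  set a := √(n * η)
  have ha : a ^ 2 = n * η := sq_sqrt (by positivity)
  have hratio : (n + 2 * a + 2 * η) / n = 1 + 2 * (a / n) + 2 * (a / n) ^ 2 := by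
    rw [show η = a ^ 2 / n by field_simp; linarith]
    field_simp
  have hsqrt : √((n + 2 * a + 2 * η) / n) ≤ rexp (a / n) := by
    calc √((n + 2 * a + 2 * η) / n) ≤ √(rexp (2 * (a / n))) :=
          sqrt_le_sqrt (hratio ▸ one_add_two_mul_add_two_mul_sq_le_exp (by positivity))
      _ = rexp (a / n) := by rw [two_mul, exp_add, sqrt_mul_self (exp_pos _).le]
  calc √((n + 2 * a + 2 * η) / n) ^ n ≤ rexp (a / n) ^ n := by gcongr
    _ = rexp a := by rw [← exp_nat_mul]; field_simp

theorem gaussian_sum_squares_tail_bound_general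
    (N : ℕ)
    (Ω : Type*) [MeasurableSpace Ω] (P : Measure Ω) [IsProbabilityMeasure P]
    (σ2 : NNReal) (hσ2 : 0 < σ2)
    (ξ : Fin N → Ω → ℝ)
    (hindep : ProbabilityTheory.iIndepFun ξ P)
    (hgauss : ∀ i, P.map (ξ i) = gaussianReal 0 σ2)
    (η : ℝ) (hη : 0 ≤ η) :
    P {ω | (σ2 : ℝ) * ((N : ℝ) + 2 * Real.sqrt ((N : ℝ) * η) + 2 * η) ≤
        ∑ i, (ξ i ω) ^ 2} ≤ ENNReal.ofReal (Real.exp (-η)) := by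
  rcases N.eq_zero_or_pos with rfl | hN
  · rcases hη.eq_or_lt with rfl | hη₀
    · simp
    · have : (0 : ℝ) < σ2 * (2 * η) := by positivity
      simp [this.not_ge]
  have hN' : (0 : ℝ) < N := by exact_mod_cast hN
  set a := √(N * η)
  set m := (N : ℝ) + 2 * a + 2 * η
  have hm : 0 < m := by positivity
  set t := (m - N) / (2 * m * σ2) with ht_def
  have ht₀ : 0 ≤ t := div_nonneg (by linarith [sqrt_nonneg (N * η)]) (by positivity)
  have ht : 1 - 2 * t * σ2 = N / m := by rw [ht_def]; field_simp; ring
  have hchernoff := hindep.measureReal_sum_sq_ge_le_exp_mul hgauss ht₀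
    (by linarith [div_pos hN' hm]) (σ2 * m)
  rw [Fintype.card_fin, ht, ← sqrt_inv, inv_div,
    show -t * (σ2 * m) = -(a + η) by rw [ht_def]; field_simp; ring] at hchernoff
  rw [ENNReal.le_ofReal_iff_toReal_le (measure_ne_top _ _) (exp_pos _).le]
  calc _ ≤ rexp (-(a + η)) * √(m / N) ^ N := hchernoff
    _ ≤ rexp (-(a + η)) * rexp a := by gcongr; exact sqrt_div_pow_le_exp_sqrt N hη
    _ = rexp (-η) := by rw [← exp_add]; ring_nf

/-- Laurent–Massart upper tail bound for the sum of squares of i.i.d. centered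
Gaussian random variables. -/
theorem gaussian_sum_squares_tail_bound
    (N : ℕ)
    (Ω : Type*) [MeasurableSpace Ω] (P : Measure Ω) [IsProbabilityMeasure P]
    (σ2 : NNReal) (hσ2 : 0 < σ2)
    (ξ : Fin N → Ω → ℝ)
    (hmeas : ∀ i, Measurable (ξ i))
    (hindep : ProbabilityTheory.iIndepFun ξ P)
    (hgauss : ∀ i, P.map (ξ i) = gaussianReal 0 σ2)
    (η : ℝ) (hη : 0 ≤ η) :
    P {ω | (σ2 : ℝ) * ((N : ℝ) + 2 * Real.sqrt ((N : ℝ) * η) + 2 * η) ≤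
        ∑ i, (ξ i ω) ^ 2} ≤ ENNReal.ofReal (Real.exp (-η)) :=
  gaussian_sum_squares_tail_bound_general N Ω P σ2 hσ2 ξ hindep hgauss η hη
end

section
/- Let X ⊆ ℝ^d be contained in an axis-aligned hypercube of edge length θ > 0, and let k : ℝ^d × ℝ^d → ℝ be a symmetric positive-semidefinite kernel satisfying |k(x,z) − k(y,z)| ≤ L_k ‖x − y‖_∞ for all x, y, z, with L_k > 0. Define the covariance pseudo-metric d_k(x,x') = √( k(x,x) + k(x',x') − 2k(x,x') ). Then for every ϱ > 0, every finite set S ⊆ X that is ϱ-separated with respect to d_k (i.e. d_k(x,x') > ϱ for all distinct x, x' ∈ S) has cardinality at most ( 1 + 4θL_k/ϱ² )^d. -/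
/-- Packing number bound with respect to the covariance pseudo-metric of a
Lipschitz kernel on a set contained in a hypercube of edge length θ.
Here points live in `Fin d → ℝ`, whose norm is the maximum norm ‖·‖_∞. -/
theorem covariance_pseudometric_packing_bound
    (d : ℕ) (θ : ℝ) (hθ : 0 < θ)
    (Xset : Set (Fin d → ℝ))
    (a : Fin d → ℝ)
    (hcube : ∀ x ∈ Xset, ∀ i, x i ∈ Set.Icc (a i) (a i + θ))
    (k : (Fin d → ℝ) → (Fin d → ℝ) → ℝ)
    (hsymm : ∀ x y, k x y = k y x)
    (hpsd : ∀ (m : ℕ) (z : Fin m → (Fin d → ℝ)),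
      (Matrix.of fun i j => k (z i) (z j)).PosSemidef)
    (Lk : ℝ) (hLk : 0 < Lk)
    (hlip : ∀ x y z : Fin d → ℝ, |k x z - k y z| ≤ Lk * ‖x - y‖)
    (ϱ : ℝ) (hϱ : 0 < ϱ)
    (S : Finset (Fin d → ℝ)) (hS : ∀ x ∈ S, x ∈ Xset)
    (hsep : ∀ x ∈ S, ∀ y ∈ S, x ≠ y →
      ϱ < Real.sqrt (k x x + k y y - 2 * k x y)) :
    (S.card : ℝ) ≤ (1 + 4 * θ * Lk / ϱ ^ 2) ^ d := by
  set r : ℝ := ϱ ^ 2 / (2 * Lk) with hrdef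
  have hrpos : 0 < r := by positivity
  -- Step 1: separation in the sup norm
  have hsepnorm : ∀ x ∈ S, ∀ y ∈ S, x ≠ y → r < ‖x - y‖ := by
    intro x hx y hy hxy
    have h1 := hsep x hx y hy hxy
    have hE : ϱ ^ 2 < k x x + k y y - 2 * k x y := (Real.lt_sqrt hϱ.le).mp h1
    have hA := abs_le.mp (hlip x y x)
    have hB := abs_le.mp (hlip x y y)
    have hk := hsymm x y
    have h2 : k x x + k y y - 2 * k x y ≤ 2 * Lk * ‖x - y‖ := by linarith
    rw [hrdef, div_lt_iff₀ (by positivity)]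
    nlinarith [norm_nonneg (x - y)]
  -- Step 2: grid map
  set M : ℤ := ⌊θ / r⌋ with hMdef
  have hM0 : 0 ≤ M := Int.floor_nonneg.mpr (by positivity)
  set f : (Fin d → ℝ) → (Fin d → ℤ) := fun x i => ⌊(x i - a i) / r⌋ with hfdef
  have hinj : Set.InjOn f S := by
    intro x hx y hy hfxy
    by_contra hxy
    have hlt : ‖x - y‖ < r := by
      rw [pi_norm_lt_iff hrpos]
      intro i
      have heq : ⌊(x i - a i) / r⌋ = ⌊(y i - a i) / r⌋ := congrFun hfxy i
      have h1 : ((⌊(x i - a i) / r⌋ : ℤ) : ℝ) ≤ (x i - a i) / r := Int.floor_le _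
      have h2 : (x i - a i) / r < ⌊(x i - a i) / r⌋ + 1 := Int.lt_floor_add_one _
      have h3 : ((⌊(y i - a i) / r⌋ : ℤ) : ℝ) ≤ (y i - a i) / r := Int.floor_le _
      have h4 : (y i - a i) / r < ⌊(y i - a i) / r⌋ + 1 := Int.lt_floor_add_one _
      have hc : ((⌊(x i - a i) / r⌋ : ℤ) : ℝ) = ((⌊(y i - a i) / r⌋ : ℤ) : ℝ) := by
        exact_mod_cast heq
      have habs : |(x i - a i) / r - (y i - a i) / r| < 1 := by
        rw [abs_lt]; constructor <;> linarith
      have hd : (x i - a i) / r - (y i - a i) / r = (x i - y i) / r := by ring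
      rw [hd, abs_div, abs_of_pos hrpos, div_lt_one hrpos] at habs
      simpa [Pi.sub_apply, Real.norm_eq_abs] using habs
    exact absurd (hsepnorm x hx y hy hxy) (not_lt.mpr hlt.le)
  -- Step 3: image lies in a grid box
  have hsub : S.image f ⊆ Finset.Icc (fun _ => (0 : ℤ)) (fun _ => M) := by
    intro v hv
    rw [Finset.mem_image] at hv
    obtain ⟨x, hx, rfl⟩ := hv
    rw [Finset.mem_Icc]
    constructor <;> intro i
    · refine Int.floor_nonneg.mpr (div_nonneg ?_ hrpos.le)
      have := (hcube x (hS x hx) i).1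
      linarith
    · apply Int.floor_le_floor
      have h1 := (hcube x (hS x hx) i).2
      gcongr
      linarith
  -- Step 4: count
  have hcard : S.card ≤ (M + 1).toNat ^ d := by
    calc S.card = (S.image f).card := (Finset.card_image_of_injOn hinj).symm
    _ ≤ (Finset.Icc (fun _ => (0 : ℤ)) (fun _ => M)).card := Finset.card_le_card hsub
    _ = ∏ _i : Fin d, (M + 1 - 0).toNat := by
        rw [Pi.card_Icc]; simp [Int.card_Icc]
    _ = (M + 1).toNat ^ d := by simp
  have hMreal : ((M + 1).toNat : ℝ) ≤ 1 + 4 * θ * Lk / ϱ ^ 2 := by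
    have h1 : ((M + 1).toNat : ℝ) = (M : ℝ) + 1 := by
      exact_mod_cast Int.toNat_of_nonneg (show (0:ℤ) ≤ M + 1 by linarith)
    have h2 : (M : ℝ) ≤ θ / r := Int.floor_le _
    have h3 : θ / r = 2 * θ * Lk / ϱ ^ 2 := by
      rw [hrdef]; field_simp
    have h4 : 2 * θ * Lk / ϱ ^ 2 ≤ 4 * θ * Lk / ϱ ^ 2 := by
      apply div_le_div_of_nonneg_right _ (by positivity)
      nlinarith
    rw [h1]; linarith [h2.trans_eq h3 |>.trans h4]
  calc (S.card : ℝ) ≤ ((M + 1).toNat : ℝ) ^ d := by exact_mod_cast hcard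
  _ ≤ (1 + 4 * θ * Lk / ϱ ^ 2) ^ d := pow_le_pow_left₀ (by positivity) hMreal d
end
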